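/- arXiv:2208.07053 — 3 statements merged into one kernel-verified Lean document; each statement's English description precedes it below -/
import Mathlib

section
/- Let α ≠ 0. There exist constants C₁ > 0 and c > 0 depending only on α such that for every β with |β| ≤ 1 and all ξ₁, ξ₂, ξ₃ ∈ ℝ with ξ₁ + ξ₂ + ξ₃ = 0 and |ξ₁| + |ξ₂| + |ξ₃| ≥ C₁, one has |-αξ₂(2ξ₂² + 3ξ₁ξ₂ + 3ξ₁²) + 2βξ₂| ≥ c |ξ₂| (⟨ξ₁⟩² + ⟨ξ₂⟩² + ⟨ξ₃⟩²). -/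
noncomputable def jb (x : ℝ) : ℝ := Real.sqrt (1 + x ^ 2)

/-! On the hyperplane the resonance factors as `ξ₂ (2β - α Q)` with
`Q = 2ξ₂² + 3ξ₁ξ₂ + 3ξ₁²`, and `2Q = S + 2(ξ₁² + ξ₃²) ≥ S` for `S = ξ₁² + ξ₂² + ξ₃²`.
Hence `|resonance| ≥ |ξ₂| (|α| S / 2 - 2)`, which dominates `(|α|/4) |ξ₂| (3 + S)` once
`S ≥ 3 + 8/|α|`; and `S ≥ (|ξ₁| + |ξ₂| + |ξ₃|)² / 3` is large when the frequencies are. -/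

lemma jb_sq (x : ℝ) : jb x ^ 2 = 1 + x ^ 2 :=
  Real.sq_sqrt (by positivity)

lemma sq_abs_add_abs_add_abs_le (x y z : ℝ) :
    (|x| + |y| + |z|) ^ 2 ≤ 3 * (x ^ 2 + y ^ 2 + z ^ 2) := by
  nlinarith [sq_nonneg (|x| - |y|), sq_nonneg (|y| - |z|), sq_nonneg (|x| - |z|),
    sq_abs x, sq_abs y, sq_abs z]

lemma sum_sq_le_two_mul_resonance_quadratic {ξ₁ ξ₂ ξ₃ : ℝ} (hsum : ξ₁ + ξ₂ + ξ₃ = 0) :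
    ξ₁ ^ 2 + ξ₂ ^ 2 + ξ₃ ^ 2 ≤ 2 * (2 * ξ₂ ^ 2 + 3 * ξ₁ * ξ₂ + 3 * ξ₁ ^ 2) := by
  have hξ₃ : ξ₃ = -(ξ₁ + ξ₂) := by linarith
  subst hξ₃
  nlinarith [sq_nonneg ξ₁, sq_nonneg (ξ₁ + ξ₂)]

lemma abs_mul_sub_le_abs_neg_mul_add {α β Q : ℝ} (hQ : 0 ≤ Q) (x : ℝ) :
    |x| * (|α| * Q - 2 * |β|) ≤ |-α * x * Q + 2 * β * x| := by
  calc |x| * (|α| * Q - 2 * |β|) = |x| * (|α * Q| - |2 * β|) := by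
        rw [abs_mul α, abs_of_nonneg hQ, abs_mul 2, abs_two]
    _ ≤ |x| * |α * Q - 2 * β| := by gcongr; exact abs_sub_abs_le_abs_sub _ _
    _ = |-α * x * Q + 2 * β * x| := by rw [← abs_mul, ← abs_neg]; congr 1; ring

lemma abs_resonance_ge {α β ξ₁ ξ₂ ξ₃ : ℝ} (hβ : |β| ≤ 1) (hsum : ξ₁ + ξ₂ + ξ₃ = 0) :
    |ξ₂| * (|α| * (ξ₁ ^ 2 + ξ₂ ^ 2 + ξ₃ ^ 2) / 2 - 2) ≤
      |-α * ξ₂ * (2 * ξ₂ ^ 2 + 3 * ξ₁ * ξ₂ + 3 * ξ₁ ^ 2) + 2 * β * ξ₂| := by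
  have hS := sum_sq_le_two_mul_resonance_quadratic hsum
  have hQ : 0 ≤ 2 * ξ₂ ^ 2 + 3 * ξ₁ * ξ₂ + 3 * ξ₁ ^ 2 := by
    linarith [(by positivity : 0 ≤ ξ₁ ^ 2 + ξ₂ ^ 2 + ξ₃ ^ 2)]
  refine le_trans (mul_le_mul_of_nonneg_left ?_ (abs_nonneg ξ₂))
    (abs_mul_sub_le_abs_neg_mul_add hQ ξ₂)
  nlinarith [mul_le_mul_of_nonneg_left hS (abs_nonneg α)]

theorem stmt7 (α : ℝ) (hα : α ≠ 0) :
    ∃ C₁ : ℝ, 0 < C₁ ∧ ∃ c : ℝ, 0 < c ∧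
      ∀ β : ℝ, |β| ≤ 1 →
        ∀ ξ₁ ξ₂ ξ₃ : ℝ, ξ₁ + ξ₂ + ξ₃ = 0 → C₁ ≤ |ξ₁| + |ξ₂| + |ξ₃| →
          c * |ξ₂| * (jb ξ₁ ^ 2 + jb ξ₂ ^ 2 + jb ξ₃ ^ 2) ≤
            |(-α * ξ₂ * (2 * ξ₂ ^ 2 + 3 * ξ₁ * ξ₂ + 3 * ξ₁ ^ 2) + 2 * β * ξ₂)| := by
  have ha : 0 < |α| := abs_pos.mpr hα
  refine ⟨3 + 8 / |α|, by positivity, |α| / 4, by positivity, ?_⟩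
  intro β hβ ξ₁ ξ₂ ξ₃ hsum hbig
  set S := ξ₁ ^ 2 + ξ₂ ^ 2 + ξ₃ ^ 2
  have hS : 3 + 8 / |α| ≤ S := by
    have h3 : (3 : ℝ) ≤ 3 + 8 / |α| := by simp only [le_add_iff_nonneg_right]; positivity
    nlinarith [sq_abs_add_abs_add_abs_le ξ₁ ξ₂ ξ₃]
  have hαS : |α| * (3 + S) / 4 ≤ |α| * S / 2 - 2 := by
    have := mul_le_mul_of_nonneg_left hS ha.le
    rw [mul_add, mul_div_cancel₀ _ ha.ne'] at this
    linarith
  rw [jb_sq, jb_sq, jb_sq]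
  calc |α| / 4 * |ξ₂| * (1 + ξ₁ ^ 2 + (1 + ξ₂ ^ 2) + (1 + ξ₃ ^ 2))
      = |ξ₂| * (|α| * (3 + S) / 4) := by ring
    _ ≤ |ξ₂| * (|α| * S / 2 - 2) := by gcongr
    _ ≤ _ := abs_resonance_ge hβ hsum
end

section
/- Let α ≠ 0. There exist constants C₂ > 0 and c > 0 depending only on α such that for every β with |β| ≤ 1 and all ξ₁, ξ₂, ξ₃ ∈ ℝ with ξ₁ + ξ₂ + ξ₃ = 0 and |ξ₁| + |ξ₂| + |ξ₃| ≥ C₂, one has both |-3α(2ξ₁² + 2ξ₃ξ₁ + ξ₃²) + 2β| ≥ c (⟨ξ₁⟩² + ⟨ξ₂⟩² + ⟨ξ₃⟩²) and |3α(2ξ₂² + 2ξ₁ξ₂ + ξ₁²) - 2β| ≥ c (⟨ξ₁⟩² + ⟨ξ₂⟩² + ⟨ξ₃⟩²). -/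
section ZeroSum

variable {x y z : ℝ}

lemma two_mul_sq_add_mul_add_sq_of_add_eq_zero (h : x + y + z = 0) :
    2 * x ^ 2 + 2 * z * x + z ^ 2 = x ^ 2 + y ^ 2 := by
  linear_combination (x - y + z) * h

lemma sum_sq_le_three_mul_of_add_eq_zero (h : x + y + z = 0) :
    x ^ 2 + y ^ 2 + z ^ 2 ≤ 3 * (x ^ 2 + y ^ 2) := by
  have hz : z = -(x + y) := by linarith
  subst hz
  nlinarith [sq_nonneg (x - y)]

end ZeroSum

lemma le_three_mul_sum_sq_of_le_sum_abs {C x y z : ℝ} (hC : 1 ≤ C)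
    (h : C ≤ |x| + |y| + |z|) : C ≤ 3 * (x ^ 2 + y ^ 2 + z ^ 2) :=
  calc C ≤ C ^ 2 := by nlinarith
    _ ≤ (|x| + |y| + |z|) ^ 2 := by gcongr
    _ ≤ 3 * (x ^ 2 + y ^ 2 + z ^ 2) := by
      nlinarith [sq_abs x, sq_abs y, sq_abs z, sq_nonneg (|x| - |y|),
        sq_nonneg (|y| - |z|), sq_nonneg (|x| - |z|)]

lemma mul_add_le_abs_sub_of_le_three_mul {α β q S : ℝ} (hα : α ≠ 0) (hβ : |β| ≤ 1)
    (hq : S ≤ 3 * q) (hS : 8 / |α| + 3 ≤ 3 * S) :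
    |α| / 4 * (3 + S) ≤ |3 * α * q - 2 * β| := by
  have hα' : 0 < |α| := abs_pos.mpr hα
  have hS' : 8 + 3 * |α| ≤ 3 * |α| * S := by
    have := mul_le_mul_of_nonneg_left hS hα'.le
    rwa [mul_add, mul_div_cancel₀ _ hα'.ne', ← mul_assoc, mul_comm |α| 3] at this
  have hlin : |α| * S - 2 ≤ |3 * α * q - 2 * β| :=
    calc |α| * S - 2 ≤ 3 * |α| * q - 2 * |β| := by nlinarith
      _ ≤ |3 * α * q| - |2 * β| := by
        rw [abs_mul, abs_mul, abs_mul, abs_two, abs_of_pos (by norm_num : (0 : ℝ) < 3)]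
        nlinarith [le_abs_self q]
      _ ≤ |3 * α * q - 2 * β| := abs_sub_abs_le_abs_sub _ _
  linarith

theorem stmt8 (α : ℝ) (hα : α ≠ 0) :
    ∃ C₂ : ℝ, 0 < C₂ ∧ ∃ c : ℝ, 0 < c ∧
      ∀ β : ℝ, |β| ≤ 1 →
        ∀ ξ₁ ξ₂ ξ₃ : ℝ, ξ₁ + ξ₂ + ξ₃ = 0 → C₂ ≤ |ξ₁| + |ξ₂| + |ξ₃| →
          c * (jb ξ₁ ^ 2 + jb ξ₂ ^ 2 + jb ξ₃ ^ 2) ≤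
              |(-(3 * α) * (2 * ξ₁ ^ 2 + 2 * ξ₃ * ξ₁ + ξ₃ ^ 2) + 2 * β)| ∧
            c * (jb ξ₁ ^ 2 + jb ξ₂ ^ 2 + jb ξ₃ ^ 2) ≤
              |(3 * α * (2 * ξ₂ ^ 2 + 2 * ξ₁ * ξ₂ + ξ₁ ^ 2) - 2 * β)| := by
  refine ⟨8 / |α| + 3, by positivity, |α| / 4, div_pos (abs_pos.mpr hα) four_pos,
    fun β hβ ξ₁ ξ₂ ξ₃ hsum hbig => ?_⟩
  have hS := le_three_mul_sum_sq_of_le_sum_abs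
    (le_add_of_nonneg_of_le (by positivity) (by norm_num)) hbig
  have hjb : jb ξ₁ ^ 2 + jb ξ₂ ^ 2 + jb ξ₃ ^ 2 = 3 + (ξ₁ ^ 2 + ξ₂ ^ 2 + ξ₃ ^ 2) := by
    rw [jb_sq, jb_sq, jb_sq]; ring
  have hsum' : ξ₂ + ξ₃ + ξ₁ = 0 := by linarith
  rw [hjb, two_mul_sq_add_mul_add_sq_of_add_eq_zero hsum,
    two_mul_sq_add_mul_add_sq_of_add_eq_zero hsum']
  constructor
  · rw [neg_mul, neg_add_eq_sub, abs_sub_comm]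
    exact mul_add_le_abs_sub_of_le_three_mul hα hβ
      (sum_sq_le_three_mul_of_add_eq_zero hsum) hS
  · refine mul_add_le_abs_sub_of_le_three_mul hα hβ ?_ hS
    linarith [sum_sq_le_three_mul_of_add_eq_zero hsum']
end

section
/- Let ρ > 1/2. There exists a constant C = C(ρ) such that for all real σ₀, σ₁, σ₂ with σ₂ ≠ 0, ∫_ℝ dx / ⟨σ₂x² + σ₁x + σ₀⟩^ρ ≤ C / |σ₂|^{1/2}. -/
open MeasureTheory

/-!
By the layer-cake formula the integral is `∫₀¹ |{x : 1/⟨q(x)⟩^ρ > t}| dt`, and this superlevel set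
lies in the sublevel set `{|q| ≤ t^(-1/ρ)}` of `q(x) = σ₂x² + σ₁x + σ₀`. Such a sublevel set has measure
`O(√(T/|σ₂|))`: on either side of the vertex, `|q(x) - q(y)| ≥ |σ₂| (x - y)²`, so each half has
diameter at most `√(2T/|σ₂|)`. The resulting bound `t^(-1/(2ρ)) / √|σ₂|` is integrable on `(0, 1]`
exactly when `ρ > 1/2`.
-/

open Set Real

lemma volume_le_ofReal_of_forall_abs_sub_le {s : Set ℝ} {δ : ℝ}
    (h : ∀ x ∈ s, ∀ y ∈ s, |x - y| ≤ δ) : volume s ≤ ENNReal.ofReal δ :=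
  (volume_le_diam s).trans (Metric.ediam_le_of_forall_dist_le h)

lemma abs_mul_sq_sub_le_abs_quadratic_sub {a b c x y : ℝ}
    (hxy : 0 ≤ (2 * a * x + b) * (2 * a * y + b)) :
    |a| * (x - y) ^ 2 ≤ |(a * x ^ 2 + b * x + c) - (a * y ^ 2 + b * y + c)| := by
  -- `(u + w)² - (u - w)² = 4uw ≥ 0` for `u = 2ax + b`, `w = 2ay + b`
  have hsum : |2 * a * (x - y)| ≤ |(2 * a * x + b) + (2 * a * y + b)| :=
    sq_le_sq.mp (by nlinarith)
  have hdiff : 2 * ((a * x ^ 2 + b * x + c) - (a * y ^ 2 + b * y + c))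
      = (x - y) * ((2 * a * x + b) + (2 * a * y + b)) := by ring
  have key : 2 * (|a| * (x - y) ^ 2) ≤ 2 * |(a * x ^ 2 + b * x + c) - (a * y ^ 2 + b * y + c)| :=
    calc 2 * (|a| * (x - y) ^ 2) = |x - y| * |2 * a * (x - y)| := by
          rw [abs_mul, abs_mul, abs_two, ← sq_abs (x - y)]; ring
      _ ≤ |x - y| * |(2 * a * x + b) + (2 * a * y + b)| := by gcongr
      _ = 2 * |(a * x ^ 2 + b * x + c) - (a * y ^ 2 + b * y + c)| := by
          rw [← abs_mul, ← hdiff, abs_mul, abs_two]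
  linarith

lemma volume_setOf_abs_quadratic_le {a : ℝ} (ha : a ≠ 0) (b c T : ℝ) :
    volume {x : ℝ | |a * x ^ 2 + b * x + c| ≤ T} ≤
      ENNReal.ofReal (2 * √(2 * T / |a|)) := by
  set S := {x : ℝ | |a * x ^ 2 + b * x + c| ≤ T}
  have hside : ∀ x ∈ S, ∀ y ∈ S, 0 ≤ (2 * a * x + b) * (2 * a * y + b) →
      |x - y| ≤ √(2 * T / |a|) := by
    intro x hx y hy hxy
    refine abs_le_sqrt ((le_div_iff₀ (abs_pos.mpr ha)).mpr ?_)
    calc (x - y) ^ 2 * |a| ≤ |(a * x ^ 2 + b * x + c) - (a * y ^ 2 + b * y + c)| := by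
          linarith [abs_mul_sq_sub_le_abs_quadratic_sub (c := c) hxy]
      _ ≤ 2 * T := by
          linarith [abs_sub (a * x ^ 2 + b * x + c) (a * y ^ 2 + b * y + c), hx.out, hy.out]
  have hcover : S ⊆ (S ∩ {x | 0 ≤ 2 * a * x + b}) ∪ (S ∩ {x | 2 * a * x + b ≤ 0}) := by
    intro x hx
    rcases le_total 0 (2 * a * x + b) with h | h
    exacts [Or.inl ⟨hx, h⟩, Or.inr ⟨hx, h⟩]
  calc volume S ≤ volume (S ∩ {x | 0 ≤ 2 * a * x + b}) + volume (S ∩ {x | 2 * a * x + b ≤ 0}) :=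
        (measure_mono hcover).trans (measure_union_le _ _)
    _ ≤ ENNReal.ofReal √(2 * T / |a|) + ENNReal.ofReal √(2 * T / |a|) := by
        gcongr
        · exact volume_le_ofReal_of_forall_abs_sub_le fun x hx y hy =>
            hside x hx.1 y hy.1 (mul_nonneg hx.2 hy.2)
        · exact volume_le_ofReal_of_forall_abs_sub_le fun x hx y hy =>
            hside x hx.1 y hy.1 (mul_nonneg_of_nonpos_of_nonpos hx.2 hy.2)
    _ = ENNReal.ofReal (2 * √(2 * T / |a|)) := by
        rw [← ENNReal.ofReal_add (sqrt_nonneg _) (sqrt_nonneg _), ← two_mul]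

lemma integral_Ioc_zero_one_mul_rpow_neg {p : ℝ} (hp : p < 1) (K : ℝ) :
    ∫ t in Ioc (0 : ℝ) 1, K * t ^ (-p) = K / (1 - p) := by
  rw [integral_const_mul, ← intervalIntegral.integral_of_le zero_le_one,
    integral_rpow (Or.inl (by linarith)), one_rpow, zero_rpow (by linarith)]
  ring_nf

lemma lintegral_le_of_meas_lt_le_mul_rpow_neg {α : Type*} [MeasurableSpace α] {μ : Measure α}
    {f : α → ℝ} (hf_nonneg : 0 ≤ f) (hf_le_one : ∀ x, f x ≤ 1) (hf : AEMeasurable f μ)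
    {K p : ℝ} (hK : 0 ≤ K) (hp : p < 1)
    (hmeas : ∀ t ∈ Ioo (0 : ℝ) 1, μ {x | t < f x} ≤ ENNReal.ofReal (K * t ^ (-p))) :
    ∫⁻ x, ENNReal.ofReal (f x) ∂μ ≤ ENNReal.ofReal (K / (1 - p)) := by
  have hbound : ∀ t ∈ Ioi (0 : ℝ), μ {x | t < f x} ≤
      (Ioc (0 : ℝ) 1).indicator (fun t => ENNReal.ofReal (K * t ^ (-p))) t := by
    intro t (ht : 0 < t)
    rcases lt_or_ge t 1 with h1 | h1
    · rw [indicator_of_mem (show t ∈ Ioc 0 1 from ⟨ht, h1.le⟩)]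
      exact hmeas t ⟨ht, h1⟩
    · have : {x | t < f x} = ∅ :=
        eq_empty_of_forall_notMem fun x hx => (hx.out.trans_le (hf_le_one x)).not_ge h1
      simp [this]
  have hint : IntegrableOn (fun t : ℝ => K * t ^ (-p)) (Ioc 0 1) :=
    ((intervalIntegral.intervalIntegrable_rpow' (by linarith)).1).const_mul K
  have hnonneg : 0 ≤ᵐ[volume.restrict (Ioc (0 : ℝ) 1)] fun t => K * t ^ (-p) := by
    filter_upwards [ae_restrict_mem measurableSet_Ioc] with t ht
    exact mul_nonneg hK (rpow_nonneg ht.1.le _)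
  calc ∫⁻ x, ENNReal.ofReal (f x) ∂μ = ∫⁻ t in Ioi 0, μ {x | t < f x} :=
        lintegral_eq_lintegral_meas_lt μ (Filter.Eventually.of_forall hf_nonneg) hf
    _ ≤ ∫⁻ t in Ioi 0, (Ioc (0 : ℝ) 1).indicator (fun t => ENNReal.ofReal (K * t ^ (-p))) t :=
        setLIntegral_mono' measurableSet_Ioi hbound
    _ = ∫⁻ t in Ioc 0 1, ENNReal.ofReal (K * t ^ (-p)) := by
        rw [lintegral_indicator measurableSet_Ioc, Measure.restrict_restrict measurableSet_Ioc,
          inter_eq_left.mpr Ioc_subset_Ioi_self]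
    _ = ENNReal.ofReal (K / (1 - p)) := by
        rw [← ofReal_integral_eq_lintegral_ofReal hint hnonneg,
          integral_Ioc_zero_one_mul_rpow_neg hp]

@[fun_prop]
lemma continuous_jb : Continuous jb := by
  unfold jb; fun_prop

lemma abs_le_jb (u : ℝ) : |u| ≤ jb u :=
  abs_le_sqrt (by linarith)

lemma one_le_jb (u : ℝ) : 1 ≤ jb u :=
  one_le_sqrt.mpr (by nlinarith)

lemma jb_pos (u : ℝ) : 0 < jb u :=
  one_pos.trans_le (one_le_jb u)

lemma one_div_jb_rpow_le_one {ρ : ℝ} (hρ : 0 ≤ ρ) (u : ℝ) : 1 / jb u ^ ρ ≤ 1 :=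
  div_le_one_of_le₀ (one_le_rpow (one_le_jb u) hρ) (rpow_nonneg (jb_pos u).le ρ)

lemma abs_le_rpow_of_lt_one_div_jb_rpow {ρ t u : ℝ} (hρ : 0 < ρ) (ht : 0 < t)
    (h : t < 1 / jb u ^ ρ) : |u| ≤ t ^ (-ρ⁻¹) := by
  have hjb := jb_pos u
  have : jb u ^ ρ < t⁻¹ := by
    rwa [lt_div_iff₀ (by positivity), mul_comm, ← lt_div_iff₀ ht, one_div] at h
  rw [rpow_neg ht.le, ← inv_rpow ht.le]
  exact (abs_le_jb u).trans ((lt_rpow_inv_iff_of_pos hjb.le (by positivity) hρ).mpr this).le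

theorem stmt10 (ρ : ℝ) (hρ : 1/2 < ρ) :
    ∃ C : ℝ, 0 < C ∧
      ∀ σ₀ σ₁ σ₂ : ℝ, σ₂ ≠ 0 →
        (∫⁻ x : ℝ, ENNReal.ofReal (1 / jb (σ₂ * x ^ 2 + σ₁ * x + σ₀) ^ ρ)) ≤
          ENNReal.ofReal (C / |σ₂| ^ (1/2 : ℝ)) := by
  have hρ0 : 0 < ρ := by linarith
  have hp : (2 * ρ)⁻¹ < 1 := inv_lt_one_of_one_lt₀ (by linarith)
  have hp' : 0 < 1 - (2 * ρ)⁻¹ := by linarith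
  refine ⟨2 * √2 / (1 - (2 * ρ)⁻¹), by positivity, fun σ₀ σ₁ σ₂ hσ => ?_⟩
  have hmeas : ∀ t ∈ Ioo (0 : ℝ) 1, volume {x | t < 1 / jb (σ₂ * x ^ 2 + σ₁ * x + σ₀) ^ ρ} ≤
      ENNReal.ofReal (2 * √(2 / |σ₂|) * t ^ (-(2 * ρ)⁻¹)) := by
    intro t ⟨ht, _⟩
    have hsqrt : √(2 * t ^ (-ρ⁻¹) / |σ₂|) = √(2 / |σ₂|) * t ^ (-(2 * ρ)⁻¹) := by
      rw [mul_div_right_comm, sqrt_mul (by positivity), sqrt_eq_rpow (t ^ _), ← rpow_mul ht.le]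
      congr 2; field_simp
    calc _ ≤ volume {x | |σ₂ * x ^ 2 + σ₁ * x + σ₀| ≤ t ^ (-ρ⁻¹)} :=
          measure_mono fun x hx => abs_le_rpow_of_lt_one_div_jb_rpow hρ0 ht hx
      _ ≤ _ := volume_setOf_abs_quadratic_le hσ σ₁ σ₀ _
      _ = _ := by rw [hsqrt, mul_assoc]
  calc _ ≤ ENNReal.ofReal (2 * √(2 / |σ₂|) / (1 - (2 * ρ)⁻¹)) :=
        lintegral_le_of_meas_lt_le_mul_rpow_neg
          (fun x => one_div_nonneg.mpr (rpow_nonneg (jb_pos _).le ρ))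
          (fun x => one_div_jb_rpow_le_one hρ0.le _) (by measurability) (by positivity) hp hmeas
    _ = _ := by
        rw [← sqrt_eq_rpow, sqrt_div (by norm_num)]
        ring_nf
end
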